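/- Let (A, X, I) be a formal context with X finite, let m₁, m₂ be mass functions on X with m₁ ≤_↑ m₂, and let β ∈ [0,1]. Then for every B ⊆ A, if B ∈ ℙ(m₁, β) then B ∈ ℙ(m₂, β). -/

import Mathlib

/-- `Y`-restricted upward derivation operator of a formal context `(A, X, I)`:
`B↑_Y = {x ∈ Y | ∀ a ∈ B, (a,x) ∈ I}`. -/
def fcaUp {A X : Type*} (I : Set (A × X)) (Y : Set X) (B : Set A) : Set X :=
  {x ∈ Y | ∀ a ∈ B, (a, x) ∈ I}

/-- Downward derivation operator: `Z↓ = {a ∈ A | ∀ x ∈ Z, (a,x) ∈ I}`. -/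
def fcaDown {A X : Type*} (I : Set (A × X)) (Z : Set X) : Set A :=
  {a | ∀ x ∈ Z, (a, x) ∈ I}

/-- `B ⊆ A` is Galois-stable with respect to `Y ⊆ X` if `(B↑_Y)↓ = B`. -/
def GaloisStable {A X : Type*} (I : Set (A × X)) (Y : Set X) (B : Set A) : Prop :=
  fcaDown I (fcaUp I Y B) = B

/-- A (Dempster–Shafer) mass function on a finite set `X`: a nonnegative real-valued
function on subsets of `X` summing to `1`. -/
def IsMassFunction {X : Type*} [Fintype X] (m : Finset X → ℝ) : Prop :=
  (∀ Y, 0 ≤ m Y) ∧ (∑ Y : Finset X, m Y = 1)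

open scoped Classical in
/-- The stability index of `G ⊆ A`:
`ρ_m(G) = Σ { m(Y) : Y ⊆ X such that G is Galois-stable w.r.t. Y }`. -/
noncomputable def stabilityIndex {A X : Type*} [Fintype X] (I : Set (A × X))
    (m : Finset X → ℝ) (G : Set A) : ℝ :=
  ∑ Y : Finset X, if GaloisStable I (↑Y : Set X) G then m Y else 0

/-- The β-categorization `ℙ(m, β) = { (G↑_X)↓ : G ⊆ A with ρ_m(G) ≥ β }`. -/
noncomputable def betaCategorization {A X : Type*} [Fintype X] (I : Set (A × X))
    (m : Finset X → ℝ) (β : ℝ) : Set (Set A) :=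
  {B | ∃ G : Set A, β ≤ stabilityIndex I m G ∧ fcaDown I (fcaUp I Set.univ G) = B}

/-- The up-set restricted order: `m₁ ≤_↑ m₂` iff for every upward closed family `𝒱`
of subsets of `X`, `Σ_{Y ∈ 𝒱} m₁(Y) ≤ Σ_{Y ∈ 𝒱} m₂(Y)`. -/
def upLE {X : Type*} [Fintype X] (m₁ m₂ : Finset X → ℝ) : Prop :=
  ∀ V : Finset (Finset X), (∀ Y ∈ V, ∀ Z : Finset X, Y ⊆ Z → Z ∈ V) →
    (∑ Y ∈ V, m₁ Y) ≤ ∑ Y ∈ V, m₂ Y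

/-!
The sets `Y` for which `G` is Galois-stable form an up-set: enlarging `Y` only shrinks
`(G↑_Y)↓`, which always contains `G`. The stability index is the mass of this up-set, so
`m₁ ≤_↑ m₂` gives `ρ_{m₁}(G) ≤ ρ_{m₂}(G)`, and every `G` witnessing `B ∈ ℙ(m₁, β)` also
witnesses `B ∈ ℙ(m₂, β)`.
-/

section

variable {A X : Type*} (I : Set (A × X))

theorem subset_fcaDown_fcaUp (Y : Set X) (G : Set A) : G ⊆ fcaDown I (fcaUp I Y G) :=
  fun _ ha _ hx => hx.2 _ ha

theorem GaloisStable.mono {Y Z : Set X} {G : Set A} (hYZ : Y ⊆ Z) (hG : GaloisStable I Y G) :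
    GaloisStable I Z G := by
  refine Set.Subset.antisymm ?_ (subset_fcaDown_fcaUp I Z G)
  intro a ha
  rw [← hG]
  exact fun x hx => ha x ⟨hYZ hx.1, hx.2⟩

variable [Fintype X]

open scoped Classical in
noncomputable def stableSupports (G : Set A) : Finset (Finset X) :=
  Finset.univ.filter fun Y : Finset X => GaloisStable I (↑Y : Set X) G

theorem mem_stableSupports {G : Set A} {Y : Finset X} :
    Y ∈ stableSupports I G ↔ GaloisStable I (↑Y : Set X) G := by
  simp [stableSupports]

theorem stableSupports_upwardClosed (G : Set A) :
    ∀ Y ∈ stableSupports I G, ∀ Z : Finset X, Y ⊆ Z → Z ∈ stableSupports I G := by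
  intro Y hY Z hYZ
  rw [mem_stableSupports] at hY ⊢
  exact hY.mono I (Finset.coe_subset.mpr hYZ)

theorem stabilityIndex_eq_sum_stableSupports (m : Finset X → ℝ) (G : Set A) :
    stabilityIndex I m G = ∑ Y ∈ stableSupports I G, m Y := by
  classical
  rw [stableSupports, Finset.sum_filter]
  rfl

theorem stabilityIndex_le_of_upLE {m₁ m₂ : Finset X → ℝ} (h : upLE m₁ m₂) (G : Set A) :
    stabilityIndex I m₁ G ≤ stabilityIndex I m₂ G := by
  rw [stabilityIndex_eq_sum_stableSupports, stabilityIndex_eq_sum_stableSupports]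
  exact h _ (stableSupports_upwardClosed I G)

theorem betaCategorization_subset_of_stabilityIndex_le {m₁ m₂ : Finset X → ℝ}
    (h : ∀ G, stabilityIndex I m₁ G ≤ stabilityIndex I m₂ G) (β : ℝ) :
    betaCategorization I m₁ β ⊆ betaCategorization I m₂ β := by
  rintro B ⟨G, hρ, rfl⟩
  exact ⟨G, hρ.trans (h G), rfl⟩

end

theorem betaCategorization_mono_upLE_general {A X : Type*} [Fintype X] (I : Set (A × X))
    (m₁ m₂ : Finset X → ℝ) (h : upLE m₁ m₂) (β : ℝ) (B : Set A)
    (hB : B ∈ betaCategorization I m₁ β) : B ∈ betaCategorization I m₂ β :=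
  betaCategorization_subset_of_stabilityIndex_le I (stabilityIndex_le_of_upLE I h) β hB

/-- if `m₁ ≤_↑ m₂` and `β ∈ [0,1]`, then `B ∈ ℙ(m₁, β)` implies
`B ∈ ℙ(m₂, β)`. -/
theorem betaCategorization_mono_upLE {A X : Type*} [Fintype X] (I : Set (A × X))
    (m₁ m₂ : Finset X → ℝ) (h₁ : IsMassFunction m₁) (h₂ : IsMassFunction m₂)
    (h : upLE m₁ m₂) (β : ℝ) (h0 : 0 ≤ β) (hβ1 : β ≤ 1) (B : Set A)
    (hB : B ∈ betaCategorization I m₁ β) : B ∈ betaCategorization I m₂ β :=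
  betaCategorization_mono_upLE_general I m₁ m₂ h β B hB
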